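/- Let a ∈ ℝ, a ≠ 0, and let U = {(x,y,p,q) ∈ ℝ⁴ : y ≠ 0 and a(2qy − p²) > 0}. Then the smooth function F : U → ℝ defined by F(x,y,p,q) = (a(2qy − p²))^{3/2} / y² satisfies both the Wuenschmann condition A = F_y + D(K) − (2/3) F_q K ≡ 0 and the Cartan condition G = D(D(F_{qq})) − D(F_{qp}) + F_{qy} ≡ 0 on U, where D = ∂_x + p ∂_y + q ∂_p + F ∂_q and K = (1/6) D(F_q) − (1/9) F_q² − (1/2) F_p. -/

import Mathlib

noncomputable section

/-- Points of the second jet space: coordinates `(x, y, p, q)`. -/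
abbrev V4 : Type := ℝ × ℝ × ℝ × ℝ

/-- Directional (partial) derivative of `f` at `m` in the constant direction `v`. -/
def pd (v : V4) (f : V4 → ℝ) (m : V4) : ℝ := fderiv ℝ f m v

def ex : V4 := (1, 0, 0, 0)
def ey : V4 := (0, 1, 0, 0)
def ep : V4 := (0, 0, 1, 0)
def eq' : V4 := (0, 0, 0, 1)

/-- The total derivative operator `(Dh)(m) = h_x + p h_y + q h_p + F h_q`. -/
def Dtot (F : V4 → ℝ) (h : V4 → ℝ) (m : V4) : ℝ :=
  pd ex h m + m.2.2.1 * pd ey h m + m.2.2.2 * pd ep h m + F m * pd eq' h m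

/-- `K = (1/6) D(F_q) − (1/9) F_q² − (1/2) F_p`. -/
def Kf (F : V4 → ℝ) (m : V4) : ℝ :=
  (1/6) * Dtot F (pd eq' F) m - (1/9) * (pd eq' F m)^2 - (1/2) * pd ep F m

/-- The Wuenschmann expression `A = F_y + D(K) − (2/3) F_q K`. -/
def Wu (F : V4 → ℝ) (m : V4) : ℝ :=
  pd ey F m + Dtot F (Kf F) m - (2/3) * pd eq' F m * Kf F m

/-- The Cartan expression `G = D(D(F_{qq})) − D(F_{qp}) + F_{qy}`. -/
def CartanG (F : V4 → ℝ) (m : V4) : ℝ :=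
  Dtot F (Dtot F (pd eq' (pd eq' F))) m - Dtot F (pd ep (pd eq' F)) m +
    pd ey (pd eq' F) m

/-!
On `U` we have `F = y⁻² W³` with `W = √(a (2 q y − p²))`, and `Wu`, `CartanG` are differential
operators, so they may be computed with `y⁻² W³` in place of `F`. Since
`(W_y, W_p, W_q) = a (q, −p, y) / W`, the partial derivatives send monomials `c yⁱ pʲ qᵏ Wⁿ`
to sums of such monomials: `F_q = 3 a y⁻¹ W`, `F_qq = 3 a² W⁻¹`, `F_qp = −3 a² p y⁻¹ W⁻¹`,
`K = a p y⁻² W − (a²/2) y⁻² W²` and `D(F_qq) = −3 a³ y⁻¹`. Substituting these, `A` and `G`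
become rational expressions in `y, p, q, W` which vanish once `q` is eliminated through
`W² = a (2 q y − p²)`.
-/

namespace Example2

open ContinuousLinearMap Set

section Locality

variable {s : Set V4}

lemma eqOn_pd (hs : IsOpen s) {f g : V4 → ℝ} (h : EqOn f g s) (v : V4) :
    EqOn (pd v f) (pd v g) s := fun m hm => by
  rw [pd, pd, (h.eventuallyEq_of_mem (hs.mem_nhds hm)).fderiv_eq]

lemma eqOn_Dtot (hs : IsOpen s) {F G h k : V4 → ℝ} (hF : EqOn F G s) (hh : EqOn h k s) :
    EqOn (Dtot F h) (Dtot G k) s := fun m hm => by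
  simp only [Dtot, hF hm, eqOn_pd hs hh _ hm]

lemma eqOn_Kf (hs : IsOpen s) {F G : V4 → ℝ} (h : EqOn F G s) : EqOn (Kf F) (Kf G) s :=
  fun m hm => by
    simp only [Kf, eqOn_Dtot hs h (eqOn_pd hs h eq') hm, eqOn_pd hs h _ hm]

lemma eqOn_Wu (hs : IsOpen s) {F G : V4 → ℝ} (h : EqOn F G s) : EqOn (Wu F) (Wu G) s :=
  fun m hm => by
    simp only [Wu, eqOn_Dtot hs h (eqOn_Kf hs h) hm, eqOn_Kf hs h hm, eqOn_pd hs h _ hm]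

lemma eqOn_CartanG (hs : IsOpen s) {F G : V4 → ℝ} (h : EqOn F G s) :
    EqOn (CartanG F) (CartanG G) s := fun m hm => by
  have hq := eqOn_pd hs h eq'
  simp only [CartanG, eqOn_Dtot hs h (eqOn_Dtot hs h (eqOn_pd hs hq eq')) hm,
    eqOn_Dtot hs h (eqOn_pd hs hq ep) hm, eqOn_pd hs hq ey hm]

end Locality

lemma Dtot_add {F f g : V4 → ℝ} {m : V4} (hf : DifferentiableAt ℝ f m)
    (hg : DifferentiableAt ℝ g m) : Dtot F (f + g) m = Dtot F f m + Dtot F g m := by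
  simp only [Dtot, pd, fderiv_add hf hg, add_apply]
  ring

def projY : V4 →L[ℝ] ℝ := (fst ℝ ℝ (ℝ × ℝ)).comp (snd ℝ ℝ (ℝ × ℝ × ℝ))
def projP : V4 →L[ℝ] ℝ :=
  ((fst ℝ ℝ ℝ).comp (snd ℝ ℝ (ℝ × ℝ))).comp (snd ℝ ℝ (ℝ × ℝ × ℝ))
def projQ : V4 →L[ℝ] ℝ :=
  ((snd ℝ ℝ ℝ).comp (snd ℝ ℝ (ℝ × ℝ))).comp (snd ℝ ℝ (ℝ × ℝ × ℝ))

@[simp] lemma projY_apply (v : V4) : projY v = v.2.1 := rfl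
@[simp] lemma projP_apply (v : V4) : projP v = v.2.2.1 := rfl
@[simp] lemma projQ_apply (v : V4) : projQ v = v.2.2.2 := rfl

variable (a : ℝ)

def S (m : V4) : ℝ := a * (2 * m.2.2.2 * m.2.1 - m.2.2.1 ^ 2)

def W (m : V4) : ℝ := √(S a m)

def U : Set V4 := {m | m.2.1 ≠ 0 ∧ 0 < S a m}

def mono (c : ℝ) (i : ℤ) (j k : ℕ) (n : ℤ) (m : V4) : ℝ :=
  c * m.2.1 ^ i * m.2.2.1 ^ j * m.2.2.2 ^ k * W a m ^ n

variable {a}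

lemma isOpen_U : IsOpen (U a) := by
  have hS : Continuous (S a) := by unfold S; fun_prop
  exact (isOpen_compl_singleton.preimage (by fun_prop)).inter (isOpen_Ioi.preimage hS)

lemma W_pos {m : V4} (hm : m ∈ U a) : 0 < W a m := Real.sqrt_pos.mpr hm.2

lemma W_sq {m : V4} (hm : m ∈ U a) : W a m ^ 2 = S a m := Real.sq_sqrt hm.2.le

lemma ne_zero_of_mem_U {m : V4} (hm : m ∈ U a) : a ≠ 0 := left_ne_zero_of_mul hm.2.ne'

lemma q_eq_of_mem_U {m : V4} (hm : m ∈ U a) :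
    m.2.2.2 = (W a m ^ 2 + a * m.2.2.1 ^ 2) / (2 * a * m.2.1) := by
  have ha := ne_zero_of_mem_U hm
  rw [W_sq hm, S]
  field_simp [hm.1]
  ring

lemma hasFDerivAt_S (m : V4) :
    HasFDerivAt (S a)
      ((2 * a * m.2.2.2) • projY + (-(2 * a * m.2.2.1)) • projP + (2 * a * m.2.1) • projQ) m := by
  have H := (((projQ.hasFDerivAt.const_mul 2).mul projY.hasFDerivAt).sub
    ((hasDerivAt_pow 2 _).comp_hasFDerivAt m projP.hasFDerivAt)).const_mul a
  refine H.congr_fderiv (ext fun v => ?_)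
  simp
  ring

lemma hasFDerivAt_mono (c : ℝ) (i : ℤ) (j k : ℕ) (n : ℤ) {m : V4} (hm : m ∈ U a) :
    HasFDerivAt (mono a c i j k n)
      ((mono a (c * i) (i - 1) j k n m + mono a (c * n * a) i j (k + 1) (n - 2) m) • projY +
       (mono a (c * j) i (j - 1) k n m + mono a (-(c * n * a)) i (j + 1) k (n - 2) m) • projP +
       (mono a (c * k) i j (k - 1) n m + mono a (c * n * a) (i + 1) j k (n - 2) m) • projQ)
      m := by
  have hy := hm.1
  have hw := (W_pos hm).ne'
  have hW : HasFDerivAt (W a) ((1 / (2 * W a m)) • ((2 * a * m.2.2.2) • projY +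
      (-(2 * a * m.2.2.1)) • projP + (2 * a * m.2.1) • projQ)) m :=
    (Real.hasDerivAt_sqrt hm.2.ne').comp_hasFDerivAt m (hasFDerivAt_S m)
  have H := ((((hasDerivAt_zpow i _ (.inl hy)).comp_hasFDerivAt m
    projY.hasFDerivAt).const_mul c).mul ((hasDerivAt_pow j _).comp_hasFDerivAt m
    projP.hasFDerivAt)).mul ((hasDerivAt_pow k _).comp_hasFDerivAt m projQ.hasFDerivAt) |>.mul
    ((hasDerivAt_zpow n _ (.inl hw)).comp_hasFDerivAt m hW)
  refine H.congr_fderiv (ext fun v => ?_)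
  simp [mono]
  rw [zpow_add_one₀ hy, show n - 2 = n - 1 - 1 by ring, zpow_sub_one₀ hw (n - 1),
    zpow_sub_one₀ hw n]
  field_simp
  ring

section MonoDerivatives

variable (c : ℝ) (i : ℤ) (j k : ℕ) (n : ℤ) {m : V4}

lemma pd_ex_mono (hm : m ∈ U a) : pd ex (mono a c i j k n) m = 0 := by
  rw [pd, (hasFDerivAt_mono c i j k n hm).fderiv]
  simp [ex]

lemma pd_ey_mono (hm : m ∈ U a) : pd ey (mono a c i j k n) m =
    mono a (c * i) (i - 1) j k n m + mono a (c * n * a) i j (k + 1) (n - 2) m := by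
  rw [pd, (hasFDerivAt_mono c i j k n hm).fderiv]
  simp [ey]

lemma pd_ep_mono (hm : m ∈ U a) : pd ep (mono a c i j k n) m =
    mono a (c * j) i (j - 1) k n m + mono a (-(c * n * a)) i (j + 1) k (n - 2) m := by
  rw [pd, (hasFDerivAt_mono c i j k n hm).fderiv]
  simp [ep]

lemma pd_eq_mono (hm : m ∈ U a) : pd eq' (mono a c i j k n) m =
    mono a (c * k) i j (k - 1) n m + mono a (c * n * a) (i + 1) j k (n - 2) m := by
  rw [pd, (hasFDerivAt_mono c i j k n hm).fderiv]
  simp [eq']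

lemma Dtot_mono (F : V4 → ℝ) (hm : m ∈ U a) : Dtot F (mono a c i j k n) m =
    m.2.2.1 * (mono a (c * i) (i - 1) j k n m + mono a (c * n * a) i j (k + 1) (n - 2) m) +
    m.2.2.2 * (mono a (c * j) i (j - 1) k n m + mono a (-(c * n * a)) i (j + 1) k (n - 2) m) +
    F m * (mono a (c * k) i j (k - 1) n m + mono a (c * n * a) (i + 1) j k (n - 2) m) := by
  rw [Dtot, pd_ex_mono c i j k n hm, pd_ey_mono c i j k n hm, pd_ep_mono c i j k n hm,
    pd_eq_mono c i j k n hm, zero_add]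

end MonoDerivatives

lemma eqOn_F : EqOn (fun m : V4 => (a * (2 * m.2.2.2 * m.2.1 - m.2.2.1^2)) ^ ((3:ℝ)/2) / m.2.1^2)
    (mono a 1 (-2) 0 0 3) (U a) := fun m hm => by
  have h : S a m ^ ((3:ℝ)/2) = W a m ^ 3 := by
    rw [W, Real.sqrt_eq_rpow, ← Real.rpow_mul_natCast hm.2.le]
    norm_num
  change S a m ^ ((3:ℝ)/2) / m.2.1 ^ 2 = _
  rw [h]
  simp [mono, div_eq_mul_inv, mul_comm]

lemma pd_eq_F : EqOn (pd eq' (mono a 1 (-2) 0 0 3)) (mono a (3 * a) (-1) 0 0 1) (U a) :=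
  fun m hm => by
    rw [pd_eq_mono _ _ _ _ _ hm]
    norm_num [mono]

lemma pd_eq_pd_eq_F :
    EqOn (pd eq' (pd eq' (mono a 1 (-2) 0 0 3))) (mono a (3 * a ^ 2) 0 0 0 (-1)) (U a) :=
  fun m hm => by
    rw [eqOn_pd isOpen_U pd_eq_F eq' hm, pd_eq_mono _ _ _ _ _ hm]
    simp only [mono]
    push_cast
    ring

lemma pd_ep_pd_eq_F :
    EqOn (pd ep (pd eq' (mono a 1 (-2) 0 0 3))) (mono a (-(3 * a ^ 2)) (-1) 1 0 (-1)) (U a) :=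
  fun m hm => by
    rw [eqOn_pd isOpen_U pd_eq_F ep hm, pd_ep_mono _ _ _ _ _ hm]
    simp only [mono]
    push_cast
    ring

lemma pd_ey_pd_eq_F {m : V4} (hm : m ∈ U a) :
    pd ey (pd eq' (mono a 1 (-2) 0 0 3)) m =
      mono a (-(3 * a)) (-2) 0 0 1 m + mono a (3 * a ^ 2) (-1) 0 1 (-1) m := by
  rw [eqOn_pd isOpen_U pd_eq_F ey hm, pd_ey_mono _ _ _ _ _ hm]
  simp only [mono]
  push_cast
  ring

lemma Kf_F : EqOn (Kf (mono a 1 (-2) 0 0 3))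
    (mono a a (-2) 1 0 1 + mono a (-(a ^ 2 / 2)) (-2) 0 0 2) (U a) := fun m hm => by
  rw [Kf, eqOn_Dtot isOpen_U (eqOn_refl _ _) pd_eq_F hm, Dtot_mono _ _ _ _ _ _ hm,
    pd_eq_F hm, pd_ep_mono _ _ _ _ _ hm]
  have hw := (W_pos hm).ne'
  simp only [mono, Pi.add_apply]
  push_cast
  field_simp [hm.1]
  ring

lemma Dtot_pd_eq_pd_eq_F :
    EqOn (Dtot (mono a 1 (-2) 0 0 3) (pd eq' (pd eq' (mono a 1 (-2) 0 0 3))))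
      (mono a (-(3 * a ^ 3)) (-1) 0 0 0) (U a) := fun m hm => by
  rw [eqOn_Dtot isOpen_U (eqOn_refl _ _) pd_eq_pd_eq_F hm, Dtot_mono _ _ _ _ _ _ hm]
  have hw := (W_pos hm).ne'
  simp only [mono]
  push_cast
  field_simp [hm.1]
  ring

lemma Wu_F {m : V4} (hm : m ∈ U a) : Wu (mono a 1 (-2) 0 0 3) m = 0 := by
  rw [Wu, eqOn_Dtot isOpen_U (eqOn_refl _ _) Kf_F hm, Kf_F hm, pd_ey_mono _ _ _ _ _ hm,
    pd_eq_F hm, Dtot_add (hasFDerivAt_mono _ _ _ _ _ hm).differentiableAt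
      (hasFDerivAt_mono _ _ _ _ _ hm).differentiableAt,
    Dtot_mono _ _ _ _ _ _ hm, Dtot_mono _ _ _ _ _ _ hm]
  have ha := ne_zero_of_mem_U hm
  have hw := (W_pos hm).ne'
  simp only [mono, Pi.add_apply]
  push_cast
  rw [q_eq_of_mem_U hm]
  field_simp [hm.1]
  ring

lemma CartanG_F {m : V4} (hm : m ∈ U a) : CartanG (mono a 1 (-2) 0 0 3) m = 0 := by
  rw [CartanG, eqOn_Dtot isOpen_U (eqOn_refl _ _) Dtot_pd_eq_pd_eq_F hm,
    eqOn_Dtot isOpen_U (eqOn_refl _ _) pd_ep_pd_eq_F hm, Dtot_mono _ _ _ _ _ _ hm,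
    Dtot_mono _ _ _ _ _ _ hm, pd_ey_pd_eq_F hm]
  have ha := ne_zero_of_mem_U hm
  have hw := (W_pos hm).ne'
  simp only [mono]
  push_cast
  rw [q_eq_of_mem_U hm]
  field_simp [hm.1]
  ring

end Example2

theorem example2_einstein_weyl_general (a : ℝ) :
    ∀ m ∈ {m : V4 | m.2.1 ≠ 0 ∧ a * (2 * m.2.2.2 * m.2.1 - m.2.2.1^2) > 0},
      Wu (fun m : V4 =>
          (a * (2 * m.2.2.2 * m.2.1 - m.2.2.1^2)) ^ ((3:ℝ)/2) / m.2.1^2) m = 0 ∧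
      CartanG (fun m : V4 =>
          (a * (2 * m.2.2.2 * m.2.1 - m.2.2.1^2)) ^ ((3:ℝ)/2) / m.2.1^2) m = 0 := by
  intro m hm
  open Example2 in
  exact ⟨(eqOn_Wu isOpen_U eqOn_F hm).trans (Wu_F hm),
    (eqOn_CartanG isOpen_U eqOn_F hm).trans (CartanG_F hm)⟩

/-- Example 2: for every real `a ≠ 0`, the function `F = (a(2qy − p²))^{3/2} / y²`
satisfies both the Wuenschmann condition `A ≡ 0` and the Cartan condition `G ≡ 0`
on `U = {y ≠ 0 and a(2qy − p²) > 0}`. -/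
theorem example2_einstein_weyl (a : ℝ) (ha : a ≠ 0) :
    ∀ m ∈ {m : V4 | m.2.1 ≠ 0 ∧ a * (2 * m.2.2.2 * m.2.1 - m.2.2.1^2) > 0},
      Wu (fun m : V4 =>
          (a * (2 * m.2.2.2 * m.2.1 - m.2.2.1^2)) ^ ((3:ℝ)/2) / m.2.1^2) m = 0 ∧
      CartanG (fun m : V4 =>
          (a * (2 * m.2.2.2 * m.2.1 - m.2.2.1^2)) ^ ((3:ℝ)/2) / m.2.1^2) m = 0 :=
  example2_einstein_weyl_general a
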